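/- Let a ∈ Δ_m and b ∈ Δ_n be weight vectors and let U(a, b) be the transport polytope. Every extreme point of U(a, b) has at most m + n − 1 nonzero entries. Consequently, for any cost matrix D, there exists an optimal transport plan P* minimizing ⟨P, D⟩ over U(a,b) that is sparse, with at most m + n − 1 nonzero entries. -/

import Mathlib

/-!
If an extreme point `P` of `U(a, b)` had more than `m + n - 1` nonzero entries, the marginals of
the matrix units supported there would be linearly dependent, because all marginals lie in the
hyperplane `∑ rᵢ = ∑ cⱼ` of `ℝᵐ × ℝⁿ`. Such a dependence is a nonzero matrix `C` supported on the
support of `P` with zero row and column sums, and `P ± t C` stay in `U(a, b)` for small `t`,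
contradicting extremality. For the optimal plan: `U(a, b)` is compact, so by Krein–Milman the face
of minimizers of the linear cost `⟨·, D⟩` has an extreme point, which is extreme in `U(a, b)`.
-/

open Finset Filter Topology

theorem IsCompact.exists_mem_extremePoints_isMinOn {E : Type*} [AddCommGroup E] [Module ℝ E]
    [TopologicalSpace E] [T2Space E] [IsTopologicalAddGroup E] [ContinuousSMul ℝ E]
    [LocallyConvexSpace ℝ E] {s : Set E} (hs : IsCompact s) (hne : s.Nonempty)
    (l : StrongDual ℝ E) : ∃ x ∈ s.extremePoints ℝ, IsMinOn l s x := by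
  obtain ⟨z, hz, hzmin⟩ := hs.exists_isMinOn hne l.continuous.continuousOn
  have hexp : IsExposed ℝ s ((-l).toExposed s) := ContinuousLinearMap.toExposed.isExposed
  obtain ⟨x, hx⟩ := (hexp.isCompact hs).extremePoints_nonempty
    ⟨z, hz, fun y hy => by simpa using hzmin hy⟩
  exact ⟨x, hexp.isExtreme.extremePoints_subset_extremePoints hx,
    fun y hy => by simpa using hx.1.2 y hy⟩

theorem eventually_abs_mul_le {α : Type*} [Finite α] {p c : α → ℝ} (hp : ∀ x, 0 ≤ p x)
    (hc : ∀ x, p x = 0 → c x = 0) : ∀ᶠ t in 𝓝 (0 : ℝ), ∀ x, |t * c x| ≤ p x := by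
  refine eventually_all.2 fun x => ?_
  rcases (hp x).eq_or_lt with hx | hx
  · simp [hc x hx.symm, ← hx]
  · have : Tendsto (fun t : ℝ => |t * c x|) (𝓝 0) (𝓝 0) := by
      simpa using ((continuous_id.mul continuous_const).abs.tendsto (0 : ℝ))
    exact (this.eventually (gt_mem_nhds hx)).mono fun _ => le_of_lt

variable {ι κ : Type*} [Fintype ι] [Fintype κ]

instance : LocallyConvexSpace ℝ (Matrix ι κ ℝ) :=
  inferInstanceAs (LocallyConvexSpace ℝ (ι → κ → ℝ))

namespace Matrix

def marginals : Matrix ι κ ℝ →ₗ[ℝ] (ι → ℝ) × (κ → ℝ) where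
  toFun P := (fun i => ∑ j, P i j, fun j => ∑ i, P i j)
  map_add' P Q := by ext <;> simp [sum_add_distrib]
  map_smul' c P := by ext <;> simp [mul_sum]

theorem marginals_eq_zero_iff {C : Matrix ι κ ℝ} :
    marginals C = 0 ↔ (∀ i, ∑ j, C i j = 0) ∧ ∀ j, ∑ i, C i j = 0 := by
  simp [marginals, Prod.ext_iff, funext_iff]

noncomputable def frobeniusDual (D : Matrix ι κ ℝ) : StrongDual ℝ (Matrix ι κ ℝ) :=
  LinearMap.toContinuousLinearMap
    { toFun := fun P => ∑ i, ∑ j, P i j * D i j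
      map_add' := fun P Q => by simp [add_mul, sum_add_distrib]
      map_smul' := fun c P => by simp [mul_sum, mul_assoc] }

theorem finrank_range_marginals_lt [Nonempty ι] :
    Module.finrank ℝ (LinearMap.range (marginals : Matrix ι κ ℝ →ₗ[ℝ] _)) <
      Fintype.card ι + Fintype.card κ := by
  classical
  obtain ⟨i₀⟩ := ‹Nonempty ι›
  -- Both marginals of `P` have total mass `∑ i, ∑ j, P i j`, so `(e i₀, 0)` is not a marginal.
  have hne : LinearMap.range (marginals : Matrix ι κ ℝ →ₗ[ℝ] _) ≠ ⊤ := by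
    intro htop
    obtain ⟨P, hP⟩ :
        ((Pi.single i₀ 1 : ι → ℝ), (0 : κ → ℝ)) ∈ LinearMap.range marginals :=
      htop ▸ Submodule.mem_top
    have hrow := congrArg (fun p => ∑ i, p.1 i) hP
    have hcol := congrArg (fun p => ∑ j, p.2 j) hP
    simp [marginals] at hrow hcol
    exact one_ne_zero (hrow.symm.trans (sum_comm.trans hcol))
  simpa [Module.finrank_prod] using Submodule.finrank_lt hne

theorem exists_ne_zero_marginals_eq_zero_of_card_lt (S : Finset (ι × κ))
    (hS : Fintype.card ι + Fintype.card κ - 1 < #S) :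
    ∃ C : Matrix ι κ ℝ, C ≠ 0 ∧ marginals C = 0 ∧
      ∀ i j, (i, j) ∉ S → C i j = 0 := by
  classical
  obtain ⟨q₀, -⟩ := card_pos.1 (by omega : 0 < #S)
  have : Nonempty ι := ⟨q₀.1⟩
  let e : S → Matrix ι κ ℝ := fun q => stdBasis ℝ ι κ q
  have he : LinearIndependent ℝ e :=
    (stdBasis ℝ ι κ).linearIndependent.comp _ Subtype.val_injective
  have hdep : ¬LinearIndependent ℝ (marginals ∘ e) := by
    rw [linearIndependent_iff_card_le_finrank_span, Fintype.card_coe, not_le]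
    calc (Set.range (marginals ∘ e)).finrank ℝ
        ≤ Module.finrank ℝ (LinearMap.range (marginals : Matrix ι κ ℝ →ₗ[ℝ] _)) :=
          Submodule.finrank_mono <| Submodule.span_le.2 <| Set.range_comp_subset_range _ _
      _ < #S := by have := finrank_range_marginals_lt (ι := ι) (κ := κ); omega
  obtain ⟨c, hc, q, hq⟩ := Fintype.not_linearIndependent_iff.1 hdep
  refine ⟨∑ q, c q • e q, fun h => hq (Fintype.linearIndependent_iff.1 he c h q), ?_, ?_⟩
  · simpa [map_sum, map_smul] using hc
  · intro i j hij
    simp only [sum_apply, smul_apply]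
    refine sum_eq_zero fun ⟨⟨i', j'⟩, hS'⟩ _ => ?_
    have hne : ¬(i' = i ∧ j' = j) := by rintro ⟨rfl, rfl⟩; exact hij hS'
    simp [e, stdBasis_eq_single, hne]


end Matrix

open Matrix

def transportPolytope (a : ι → ℝ) (b : κ → ℝ) : Set (Matrix ι κ ℝ) :=
  {P | (∀ i j, 0 ≤ P i j) ∧ (∀ i, ∑ j, P i j = a i) ∧ (∀ j, ∑ i, P i j = b j)}

section transportPolytope

variable {a : ι → ℝ} {b : κ → ℝ}

theorem vecMulVec_mem_transportPolytope (ha0 : ∀ i, 0 ≤ a i) (hb0 : ∀ j, 0 ≤ b j)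
    (ha1 : ∑ i, a i = 1) (hb1 : ∑ j, b j = 1) : vecMulVec a b ∈ transportPolytope a b :=
  ⟨fun i j => mul_nonneg (ha0 i) (hb0 j),
    fun i => by simp [vecMulVec_apply, ← mul_sum, hb1],
    fun j => by simp [vecMulVec_apply, ← sum_mul, ha1]⟩

variable (a b) in
theorem isCompact_transportPolytope : IsCompact (transportPolytope a b) := by
  have hclosed : IsClosed (transportPolytope a b) := by
    simp only [transportPolytope, Set.ofPred_and, Set.ofPred_forall]
    refine .inter (isClosed_iInter fun i => isClosed_iInter fun j =>
      isClosed_le continuous_const (by fun_prop)) (.inter ?_ ?_)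
    · exact isClosed_iInter fun i => isClosed_eq (by fun_prop) continuous_const
    · exact isClosed_iInter fun j => isClosed_eq (by fun_prop) continuous_const
  refine (isCompact_univ_pi fun i => isCompact_univ_pi fun j => isCompact_Icc (a := 0) (b := a i)
    ).of_isClosed_subset hclosed fun P ⟨hP0, hProw, _⟩ i _ j _ => ⟨hP0 i j, ?_⟩
  exact hProw i ▸ single_le_sum (fun j _ => hP0 i j) (mem_univ j)

theorem add_smul_mem_transportPolytope {P C : Matrix ι κ ℝ} {t : ℝ}
    (hP : P ∈ transportPolytope a b) (hC : marginals C = 0)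
    (hPC : ∀ i j, |t * C i j| ≤ P i j) :
    P + t • C ∈ transportPolytope a b := by
  obtain ⟨hP0, hProw, hPcol⟩ := hP
  obtain ⟨hCrow, hCcol⟩ := marginals_eq_zero_iff.1 hC
  refine ⟨fun i j => ?_, fun i => ?_, fun j => ?_⟩
  · have := neg_abs_le (t * C i j)
    simp only [Matrix.add_apply, Matrix.smul_apply, smul_eq_mul]
    linarith [hPC i j]
  · simp [sum_add_distrib, ← mul_sum, hCrow, hProw]
  · simp [sum_add_distrib, ← mul_sum, hCcol, hPcol]

theorem ncard_support_le_of_mem_extremePoints {P : Matrix ι κ ℝ}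
    (hP : P ∈ (transportPolytope a b).extremePoints ℝ) :
    {q : ι × κ | P q.1 q.2 ≠ 0}.ncard ≤ Fintype.card ι + Fintype.card κ - 1 := by
  classical
  by_contra! hcard
  rw [Set.ncard_eq_toFinset_card'] at hcard
  obtain ⟨C, hC0, hC, hCS⟩ := exists_ne_zero_marginals_eq_zero_of_card_lt _ hcard
  have hsmall : ∀ᶠ t in 𝓝[≠] (0 : ℝ), ∀ q : ι × κ, |t * C q.1 q.2| ≤ P q.1 q.2 :=
    nhdsWithin_le_nhds <| eventually_abs_mul_le (fun q => hP.1.1 q.1 q.2)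
      fun q hq => hCS _ _ (by simpa using hq)
  obtain ⟨t, hbound, ht0⟩ := (hsmall.and self_mem_nhdsWithin).exists
  have hadd := add_smul_mem_transportPolytope hP.1 hC (fun i j => hbound (i, j))
  have hsub : P - t • C ∈ transportPolytope a b := by
    simpa [sub_eq_add_neg] using
      add_smul_mem_transportPolytope hP.1 hC (t := -t) (fun i j => by simpa using hbound (i, j))
  have hPt : P - t • C = P := hP.2 hsub hadd (mem_openSegment_sub_add P (t • C))
  exact hC0 (smul_right_injective _ ht0 (by simpa using hPt))

end transportPolytope

/-- Every extreme point of the transport polytope `U(a, b)` has at most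
`m + n - 1` nonzero entries; consequently, for any cost matrix `D` there exists an optimal
transport plan minimizing `⟨P, D⟩` over `U(a, b)` with at most `m + n - 1` nonzero entries. -/
theorem transport_polytope_extreme_points_sparse {m n : ℕ}
    (a : Fin m → ℝ) (b : Fin n → ℝ)
    (ha0 : ∀ i, 0 ≤ a i) (hb0 : ∀ j, 0 ≤ b j)
    (ha1 : ∑ i, a i = 1) (hb1 : ∑ j, b j = 1)
    (U : Set (Matrix (Fin m) (Fin n) ℝ))
    (hU : U = {P | (∀ i j, 0 ≤ P i j) ∧ (∀ i, ∑ j, P i j = a i) ∧ (∀ j, ∑ i, P i j = b j)}) :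
    (∀ P ∈ Set.extremePoints ℝ U,
      {q : Fin m × Fin n | P q.1 q.2 ≠ 0}.ncard ≤ m + n - 1) ∧
    ∀ D : Matrix (Fin m) (Fin n) ℝ, ∃ Pstar ∈ U,
      (∀ Q ∈ U, ∑ i, ∑ j, Pstar i j * D i j ≤ ∑ i, ∑ j, Q i j * D i j) ∧
      {q : Fin m × Fin n | Pstar q.1 q.2 ≠ 0}.ncard ≤ m + n - 1 := by
  obtain rfl : U = transportPolytope a b := hU
  have hsparse (P) (hP : P ∈ (transportPolytope a b).extremePoints ℝ) :
      {q : Fin m × Fin n | P q.1 q.2 ≠ 0}.ncard ≤ m + n - 1 := by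
    simpa using ncard_support_le_of_mem_extremePoints hP
  refine ⟨hsparse, fun D => ?_⟩
  obtain ⟨P, hPext, hPmin⟩ := (isCompact_transportPolytope a b).exists_mem_extremePoints_isMinOn
    ⟨_, vecMulVec_mem_transportPolytope ha0 hb0 ha1 hb1⟩ (frobeniusDual D)
  exact ⟨P, hPext.1, fun Q hQ => hPmin hQ, hsparse P hPext⟩
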